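/- Let I₁(x) = ∑_{k=0}^∞ (x/2)^{2k+1} / (k!·(k+1)!). For λ > 0 and σ ∈ [0, 1] define u_λ(σ) = σ + ( I₁(σ/λ) − σ I₁(1/λ) ) / ( I₁(1/λ) − (1/λ) I₁'(1/λ) ). Then for every σ ∈ [0, 1], u_λ(σ) → σ as λ → 0⁺ (the limit along λ tending to 0 from within (0, ∞)). -/

import Mathlib

open Filter

/-- Modified Bessel function of the first kind of order 1. -/
noncomputable def besselI1 (x : ℝ) : ℝ :=
  ∑' k : ℕ, (x / 2) ^ (2 * k + 1) / ((k.factorial : ℝ) * ((k + 1).factorial : ℝ))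

namespace TC

noncomputable def F (k : ℕ) : ℝ := (k.factorial : ℝ) * ((k + 1).factorial : ℝ)

lemma F_pos (k : ℕ) : 0 < F k := by
  unfold F; positivity

lemma one_le_F (k : ℕ) : 1 ≤ F k := by
  unfold F
  have h1 : (1:ℝ) ≤ (k.factorial : ℝ) := by exact_mod_cast k.factorial_pos
  have h2 : (1:ℝ) ≤ ((k+1).factorial : ℝ) := by exact_mod_cast (k+1).factorial_pos
  nlinarith

noncomputable def bT (x : ℝ) (k : ℕ) : ℝ := (x / 2) ^ (2 * k + 1) / F k
noncomputable def cT (x : ℝ) (k : ℕ) : ℝ := ((2 * (k:ℝ) + 1) * (x / 2) ^ (2 * k) * (1 / 2)) / F k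
noncomputable def dT (x : ℝ) (k : ℕ) : ℝ := (2 * (k:ℝ)) * (x / 2) ^ (2 * k + 1) / F k
noncomputable def Abes (x : ℝ) : ℝ := ∑' k : ℕ, dT x k

lemma besselI1_eq (x : ℝ) : besselI1 x = ∑' k : ℕ, bT x k := rfl

lemma two_k_le (k : ℕ) : (2 * (k:ℝ) + 1) ≤ 3 * 2 ^ k := by
  induction k with
  | zero => norm_num
  | succ n ih =>
    push_cast
    have : (1:ℝ) ≤ 2 ^ n := one_le_pow₀ (by norm_num)
    push_cast at ih
    rw [pow_succ]
    nlinarith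

lemma sum_aux (r : ℝ) : Summable (fun k : ℕ => (2 * (k:ℝ) + 1) * r ^ k / F k) := by
  apply Summable.of_norm_bounded (g := fun k : ℕ => 3 * (|2 * r| ^ k / k.factorial))
    ((Real.summable_pow_div_factorial |2 * r|).mul_left 3)
  intro k
  have hF := F_pos k
  have h1 : ‖(2 * (k:ℝ) + 1) * r ^ k / F k‖ = (2 * (k:ℝ) + 1) * |r| ^ k / F k := by
    rw [Real.norm_eq_abs, abs_div, abs_mul, abs_pow, abs_of_pos hF,
      abs_of_nonneg (by positivity : (0:ℝ) ≤ 2 * (k:ℝ) + 1)]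
  rw [h1]
  have h2 : |2 * r| ^ k = 2 ^ k * |r| ^ k := by rw [abs_mul, mul_pow]; norm_num
  rw [h2]
  have hfk : (1:ℝ) ≤ (k.factorial : ℝ) := by exact_mod_cast k.factorial_pos
  have hfk1 : (1:ℝ) ≤ ((k+1).factorial : ℝ) := by exact_mod_cast (k+1).factorial_pos
  have hkey : (2 * (k:ℝ) + 1) * |r| ^ k ≤ 3 * (2 ^ k * |r| ^ k) := by
    have := two_k_le k
    have : (0:ℝ) ≤ |r| ^ k := by positivity
    nlinarith [two_k_le k]
  calc (2 * (k:ℝ) + 1) * |r| ^ k / F k ≤ 3 * (2 ^ k * |r| ^ k) / F k := by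
        gcongr
    _ ≤ 3 * (2 ^ k * |r| ^ k) / (k.factorial : ℝ) := by
        have hFge : (k.factorial : ℝ) ≤ F k := by
          unfold F; nlinarith [hfk, hfk1]
        gcongr
    _ = 3 * (2 ^ k * |r| ^ k / (k.factorial : ℝ)) := by ring

lemma abs_half_sq (x : ℝ) (k : ℕ) : |x / 2| ^ (2 * k) = ((x / 2) ^ 2) ^ k := by
  rw [pow_mul, sq_abs]

lemma summable_bT (x : ℝ) : Summable (bT x) := by
  apply Summable.of_norm_bounded
    (g := fun k : ℕ => (|x| + 1) * ((2 * (k:ℝ) + 1) * ((x / 2) ^ 2) ^ k / F k))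
    ((sum_aux ((x / 2) ^ 2)).mul_left (|x| + 1))
  intro k
  have hF := F_pos k
  have h0 : ‖bT x k‖ = |x / 2| ^ (2 * k + 1) / F k := by
    rw [bT, Real.norm_eq_abs, abs_div, abs_of_pos hF, abs_pow]
  rw [h0, pow_succ, abs_half_sq]
  have h1 : |x / 2| ≤ |x| + 1 := by
    rw [abs_div]
    have := abs_nonneg x
    norm_num
    linarith
  have h2 : (1:ℝ) ≤ 2 * (k:ℝ) + 1 := by
    have : (0:ℝ) ≤ (k:ℝ) := Nat.cast_nonneg k
    linarith
  have h3 : (0:ℝ) ≤ ((x / 2) ^ 2) ^ k := by positivity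
  calc ((x / 2) ^ 2) ^ k * |x / 2| / F k ≤ ((2 * (k:ℝ) + 1) * ((x / 2) ^ 2) ^ k) * (|x| + 1) / F k := by
        gcongr
        nlinarith
    _ = (|x| + 1) * ((2 * (k:ℝ) + 1) * ((x / 2) ^ 2) ^ k / F k) := by ring

lemma summable_cT (x : ℝ) : Summable (cT x) := by
  apply Summable.of_norm_bounded
    (g := fun k : ℕ => (2 * (k:ℝ) + 1) * ((x / 2) ^ 2) ^ k / F k) (sum_aux ((x / 2) ^ 2))
  intro k
  have hF := F_pos k
  have h0 : ‖cT x k‖ = (2 * (k:ℝ) + 1) * |x / 2| ^ (2 * k) * (1 / 2) / F k := by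
    rw [cT, Real.norm_eq_abs, abs_div, abs_of_pos hF, abs_mul, abs_mul, abs_pow,
      abs_of_nonneg (by positivity : (0:ℝ) ≤ 2 * (k:ℝ) + 1),
      abs_of_nonneg (by norm_num : (0:ℝ) ≤ (1:ℝ) / 2)]
  rw [h0, abs_half_sq]
  have h3 : (0:ℝ) ≤ ((x / 2) ^ 2) ^ k := by positivity
  apply div_le_div_of_nonneg_right ?_ hF.le
  have hk : (0:ℝ) ≤ (k:ℝ) := Nat.cast_nonneg k
  nlinarith [h3]

lemma summable_dT (x : ℝ) : Summable (dT x) := by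
  apply Summable.of_norm_bounded
    (g := fun k : ℕ => (|x| + 1) * ((2 * (k:ℝ) + 1) * ((x / 2) ^ 2) ^ k / F k))
    ((sum_aux ((x / 2) ^ 2)).mul_left (|x| + 1))
  intro k
  have hF := F_pos k
  have h0 : ‖dT x k‖ = 2 * (k:ℝ) * |x / 2| ^ (2 * k + 1) / F k := by
    rw [dT, Real.norm_eq_abs, abs_div, abs_of_pos hF, abs_mul, abs_pow,
      abs_of_nonneg (by positivity : (0:ℝ) ≤ 2 * (k:ℝ))]
  rw [h0, pow_succ, abs_half_sq]
  have h1 : |x / 2| ≤ |x| + 1 := by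
    rw [abs_div]
    have := abs_nonneg x
    norm_num
    linarith
  have h3 : (0:ℝ) ≤ ((x / 2) ^ 2) ^ k := by positivity
  have h4 : (0:ℝ) ≤ |x / 2| := abs_nonneg _
  calc 2 * (k:ℝ) * (((x / 2) ^ 2) ^ k * |x / 2|) / F k
      ≤ ((2 * (k:ℝ) + 1) * ((x / 2) ^ 2) ^ k) * (|x| + 1) / F k := by
        apply div_le_div_of_nonneg_right ?_ hF.le
        have hk : (0:ℝ) ≤ (k:ℝ) := Nat.cast_nonneg k
        have e1 : 2 * (k:ℝ) * ((x / 2) ^ 2) ^ k ≤ (2 * (k:ℝ) + 1) * ((x / 2) ^ 2) ^ k := by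
          nlinarith
        have e2 := mul_le_mul e1 h1 h4 (by positivity : (0:ℝ) ≤ (2 * (k:ℝ) + 1) * ((x / 2) ^ 2) ^ k)
        nlinarith [e2]
    _ = (|x| + 1) * ((2 * (k:ℝ) + 1) * ((x / 2) ^ 2) ^ k / F k) := by ring

lemma hasDerivAt_bT (k : ℕ) (x : ℝ) : HasDerivAt (fun y => bT y k) (cT x k) x := by
  have h : HasDerivAt (fun y : ℝ => (y / 2) ^ (2 * k + 1))
      (((2 * k + 1 : ℕ) : ℝ) * (x / 2) ^ (2 * k + 1 - 1) * (1 / 2)) x := by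
    have := ((hasDerivAt_id x).div_const 2).fun_pow (2 * k + 1)
    simpa using this
  have h2 := h.div_const (F k)
  refine h2.congr_deriv ?_
  unfold cT
  push_cast
  norm_num

lemma hasDerivAt_besselI1 (x : ℝ) : HasDerivAt besselI1 (∑' k : ℕ, cT x k) x := by
  set R : ℝ := |x| + 1 with hR
  have hxR : x ∈ Set.Ioo (-R) R := by
    constructor <;> cases abs_cases x <;> simp [hR] <;> linarith [abs_nonneg x]
  have key : HasDerivAt (fun z => ∑' k : ℕ, bT z k) (∑' k : ℕ, cT x k) x := by
    apply hasDerivAt_tsum_of_isPreconnected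
      (u := fun k : ℕ => (2 * (k:ℝ) + 1) * ((R / 2) ^ 2) ^ k / F k)
      (sum_aux _) isOpen_Ioo (isPreconnected_Ioo) (fun k y _ => hasDerivAt_bT k y)
      ?_ hxR (summable_bT x) hxR
    intro k y hy
    have hF := F_pos k
    have h0 : ‖cT y k‖ = (2 * (k:ℝ) + 1) * |y / 2| ^ (2 * k) * (1 / 2) / F k := by
      rw [cT, Real.norm_eq_abs, abs_div, abs_of_pos hF, abs_mul, abs_mul, abs_pow,
        abs_of_nonneg (by positivity : (0:ℝ) ≤ 2 * (k:ℝ) + 1),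
        abs_of_nonneg (by norm_num : (0:ℝ) ≤ (1:ℝ) / 2)]
    rw [h0, abs_half_sq]
    have hyR : (y / 2) ^ 2 ≤ (R / 2) ^ 2 := by
      obtain ⟨hy1, hy2⟩ := hy
      nlinarith
    have h3 : (0:ℝ) ≤ (y / 2) ^ 2 := by positivity
    apply div_le_div_of_nonneg_right ?_ hF.le
    have hk : (0:ℝ) ≤ (k:ℝ) := Nat.cast_nonneg k
    have hpow : ((y / 2) ^ 2) ^ k ≤ ((R / 2) ^ 2) ^ k := pow_le_pow_left₀ h3 hyR k
    have hP : (0:ℝ) ≤ ((y / 2) ^ 2) ^ k := by positivity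
    nlinarith [mul_le_mul_of_nonneg_left hpow (by linarith : (0:ℝ) ≤ 2 * (k:ℝ) + 1)]
  exact key

lemma deriv_besselI1 (x : ℝ) : deriv besselI1 x = ∑' k : ℕ, cT x k :=
  (hasDerivAt_besselI1 x).deriv

lemma denom_eq (x : ℝ) : besselI1 x - x * deriv besselI1 x = -Abes x := by
  rw [deriv_besselI1, besselI1_eq, ← tsum_mul_left]
  rw [← Summable.tsum_sub (summable_bT x) ((summable_cT x).mul_left x)]
  rw [Abes, ← tsum_neg]
  congr 1
  funext k
  unfold bT cT dT
  have h2 : (x / 2) ^ (2 * k + 1) = (x / 2) ^ (2 * k) * (x / 2) := pow_succ _ _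
  rw [h2]
  have hF := (F_pos k).ne'
  field_simp
  ring

lemma bT_nonneg {x : ℝ} (hx : 0 ≤ x) (k : ℕ) : 0 ≤ bT x k :=
  div_nonneg (pow_nonneg (by linarith) _) (F_pos k).le

lemma dT_nonneg {x : ℝ} (hx : 0 ≤ x) (k : ℕ) : 0 ≤ dT x k :=
  div_nonneg (mul_nonneg (by positivity) (pow_nonneg (by linarith) _)) (F_pos k).le

lemma besselI1_nonneg {x : ℝ} (hx : 0 ≤ x) : 0 ≤ besselI1 x := by
  rw [besselI1_eq]
  exact tsum_nonneg (bT_nonneg hx)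

lemma Abes_pos {x : ℝ} (hx : 0 < x) : 0 < Abes x := by
  refine Summable.tsum_pos (summable_dT x) (dT_nonneg hx.le) 1 ?_
  unfold dT
  have hF := F_pos 1
  have hx2 : (0:ℝ) < x / 2 := by linarith
  have hp := pow_pos hx2 (2 * 1 + 1)
  push_cast
  exact div_pos (by nlinarith) hF

lemma besselI1_mono {σ x : ℝ} (h0 : 0 ≤ σ) (h1 : σ ≤ 1) (hx : 0 ≤ x) :
    besselI1 (σ * x) ≤ besselI1 x := by
  rw [besselI1_eq, besselI1_eq]
  refine Summable.tsum_le_tsum (fun k => ?_) (summable_bT _) (summable_bT x)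
  unfold bT
  have hF := F_pos k
  apply div_le_div_of_nonneg_right ?_ hF.le
  exact pow_le_pow_left₀ (by nlinarith) (by nlinarith) _

lemma besselI1_le_key (M : ℕ) (hM : 1 ≤ M) {x : ℝ} (hx : 2 ≤ x) :
    besselI1 x ≤ (M : ℝ) * (x / 2) ^ (2 * M - 1) + (1 / (2 * (M:ℝ))) * Abes x := by
  have hx0 : (0:ℝ) ≤ x := by linarith
  have ht : (1:ℝ) ≤ x / 2 := by linarith
  have ht0 : (0:ℝ) ≤ x / 2 := by linarith
  have hMR : (1:ℝ) ≤ (M : ℝ) := by exact_mod_cast hM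
  rw [besselI1_eq, ← Summable.sum_add_tsum_nat_add M (summable_bT x)]
  have head : ∑ k ∈ Finset.range M, bT x k ≤ (M : ℝ) * (x / 2) ^ (2 * M - 1) := by
    have hb : ∀ k ∈ Finset.range M, bT x k ≤ (x / 2) ^ (2 * M - 1) := by
      intro k hk
      have hkM : k < M := Finset.mem_range.mp hk
      unfold bT
      calc (x / 2) ^ (2 * k + 1) / F k ≤ (x / 2) ^ (2 * k + 1) :=
            div_le_self (pow_nonneg ht0 _) (one_le_F k)
        _ ≤ (x / 2) ^ (2 * M - 1) := pow_le_pow_right₀ ht (by omega)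
    calc ∑ k ∈ Finset.range M, bT x k ≤ ∑ _k ∈ Finset.range M, (x / 2) ^ (2 * M - 1) :=
          Finset.sum_le_sum hb
      _ = (M : ℝ) * (x / 2) ^ (2 * M - 1) := by
          rw [Finset.sum_const, Finset.card_range, nsmul_eq_mul]
  have tail : ∑' k : ℕ, bT x (k + M) ≤ (1 / (2 * (M:ℝ))) * Abes x := by
    have hsb : Summable (fun k => bT x (k + M)) := (summable_nat_add_iff M).2 (summable_bT x)
    have hsd : Summable (fun k => dT x (k + M)) := (summable_nat_add_iff M).2 (summable_dT x)
    have step1 : ∑' k : ℕ, bT x (k + M) ≤ ∑' k : ℕ, (1 / (2 * (M:ℝ))) * dT x (k + M) := by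
      refine Summable.tsum_le_tsum (fun k => ?_) hsb (hsd.mul_left _)
      have hd : dT x (k + M) = (2 * ((k:ℝ) + (M:ℝ))) * bT x (k + M) := by
        unfold dT bT
        push_cast
        ring
      rw [hd]
      have hb := bT_nonneg hx0 (k + M)
      have hk0 : (0:ℝ) ≤ (k:ℝ) := Nat.cast_nonneg k
      rw [div_mul_eq_mul_div, one_mul, le_div_iff₀ (by linarith)]
      nlinarith
    have step2 : ∑' k : ℕ, dT x (k + M) ≤ Abes x := by
      rw [Abes, ← Summable.sum_add_tsum_nat_add M (summable_dT x)]
      have : 0 ≤ ∑ k ∈ Finset.range M, dT x k :=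
        Finset.sum_nonneg (fun k _ => dT_nonneg hx0 k)
      linarith
    calc ∑' k : ℕ, bT x (k + M) ≤ ∑' k : ℕ, (1 / (2 * (M:ℝ))) * dT x (k + M) := step1
      _ = (1 / (2 * (M:ℝ))) * ∑' k : ℕ, dT x (k + M) := tsum_mul_left
      _ ≤ (1 / (2 * (M:ℝ))) * Abes x := by
          apply mul_le_mul_of_nonneg_left step2
          positivity
  linarith

lemma Abes_ge (M : ℕ) {x : ℝ} (hx : 0 ≤ x) :
    2 * (M : ℝ) * (x / 2) ^ (2 * M + 1) / F M ≤ Abes x := by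
  have := Summable.le_tsum (summable_dT x) M (fun j _ => dT_nonneg hx j)
  unfold dT at this
  exact this

lemma ratio_tendsto : Tendsto (fun x => besselI1 x / Abes x) atTop (nhds 0) := by
  rw [NormedAddCommGroup.tendsto_nhds_zero]
  intro ε hε
  obtain ⟨M₀, hM₀⟩ := exists_nat_ge (2 / ε)
  set M : ℕ := M₀ + 1 with hMdef
  have hM : 1 ≤ M := by omega
  have hMR : (1:ℝ) ≤ (M : ℝ) := by exact_mod_cast hM
  have hMε : 2 / ε ≤ (M : ℝ) := by
    have : (M₀ : ℝ) ≤ (M : ℝ) := by exact_mod_cast Nat.le_succ M₀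
    linarith
  have h14 : 1 / (2 * (M:ℝ)) ≤ ε / 4 := by
    rw [div_le_div_iff₀ (by linarith) (by norm_num)]
    have h2 : ε * (2 / ε) = 2 := by field_simp
    nlinarith [mul_le_mul_of_nonneg_left hMε hε.le]
  filter_upwards [eventually_ge_atTop (max 2 (2 * F M / ε))] with x hx
  have hx2 : (2:ℝ) ≤ x := le_trans (le_max_left _ _) hx
  have hxF : 2 * F M / ε ≤ x := le_trans (le_max_right _ _) hx
  have hx0 : (0:ℝ) < x := by linarith
  have ht1 : (1:ℝ) ≤ x / 2 := by linarith
  have hA : 0 < Abes x := Abes_pos hx0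
  have hFM := F_pos M
  -- main: M * t^(2M-1) ≤ (ε/2) * Abes x
  have hmain : (M : ℝ) * (x / 2) ^ (2 * M - 1) ≤ ε / 2 * Abes x := by
    have hge := Abes_ge M hx0.le
    have hsplit : (x / 2) ^ (2 * M + 1) = (x / 2) ^ (2 * M - 1) * (x / 2) ^ 2 := by
      have h : 2 * M + 1 = (2 * M - 1) + 2 := by omega
      rw [h, pow_add]
    have htF : F M ≤ ε * (x / 2) ^ 2 := by
      have ht : F M / ε ≤ x / 2 := by
        have : 2 * F M / ε = 2 * (F M / ε) := by ring
        linarith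
      have h1 : F M / ε ≤ (x / 2) ^ 2 := by nlinarith
      rw [div_le_iff₀ hε] at h1
      nlinarith [h1]
    have hp0 : (0:ℝ) < (x / 2) ^ (2 * M - 1) := pow_pos (by linarith) _
    have key : (M : ℝ) * (x / 2) ^ (2 * M - 1) ≤ ε / 2 * (2 * (M : ℝ) * (x / 2) ^ (2 * M + 1) / F M) := by
      rw [hsplit]
      rw [show ε / 2 * (2 * (M : ℝ) * ((x / 2) ^ (2 * M - 1) * (x / 2) ^ 2) / F M)
          = (M : ℝ) * (x / 2) ^ (2 * M - 1) * (ε * (x / 2) ^ 2) / F M from by ring]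
      rw [le_div_iff₀ hFM]
      have hnn : (0:ℝ) ≤ (M:ℝ) * (x / 2) ^ (2 * M - 1) :=
        mul_nonneg (by positivity) hp0.le
      nlinarith [mul_le_mul_of_nonneg_left htF hnn]
    calc (M : ℝ) * (x / 2) ^ (2 * M - 1) ≤ ε / 2 * (2 * (M : ℝ) * (x / 2) ^ (2 * M + 1) / F M) := key
      _ ≤ ε / 2 * Abes x := by
          apply mul_le_mul_of_nonneg_left hge
          linarith
  have hkey := besselI1_le_key M hM hx2
  have hbnd : besselI1 x ≤ 3 / 4 * ε * Abes x := by
    have h2 : (1 / (2 * (M:ℝ))) * Abes x ≤ ε / 4 * Abes x :=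
      mul_le_mul_of_nonneg_right h14 hA.le
    linarith
  have hnn : 0 ≤ besselI1 x := besselI1_nonneg hx0.le
  rw [Real.norm_eq_abs, abs_of_nonneg (div_nonneg hnn hA.le), div_lt_iff₀ hA]
  nlinarith

end TC

/-- The nondimensionalized strong-adherence Taylor–Couette velocity profile
converges pointwise to the classical rigid-rotation profile `σ` as `λ → 0⁺`. -/
theorem taylor_couette_strong_adherence_convergence
    (σ : ℝ) (hσ : σ ∈ Set.Icc (0:ℝ) 1) :
    Tendsto (fun lam : ℝ =>
        σ + (besselI1 (σ / lam) - σ * besselI1 (1 / lam))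
          / (besselI1 (1 / lam) - 1 / lam * deriv besselI1 (1 / lam)))
      (nhdsWithin 0 (Set.Ioi 0)) (nhds σ) := by
  obtain ⟨hσ0, hσ1⟩ := hσ
  have hT : Tendsto (fun lam : ℝ => (besselI1 (σ / lam) - σ * besselI1 (1 / lam))
      / (besselI1 (1 / lam) - 1 / lam * deriv besselI1 (1 / lam)))
      (nhdsWithin 0 (Set.Ioi 0)) (nhds 0) := by
    have h1 : Tendsto (fun lam : ℝ => 1 / lam) (nhdsWithin 0 (Set.Ioi 0)) atTop := by
      simpa [one_div] using tendsto_inv_nhdsGT_zero (𝕜 := ℝ)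
    have hcomp : Tendsto (fun lam : ℝ => besselI1 (1 / lam) / TC.Abes (1 / lam))
        (nhdsWithin 0 (Set.Ioi 0)) (nhds 0) := TC.ratio_tendsto.comp h1
    apply squeeze_zero_norm' ?_ hcomp
    filter_upwards [self_mem_nhdsWithin] with lam hlam
    have hlam0 : (0:ℝ) < lam := hlam
    have hx0 : (0:ℝ) < 1 / lam := by positivity
    have hA := TC.Abes_pos hx0
    have hσx : σ / lam = σ * (1 / lam) := by ring
    have hden : besselI1 (1 / lam) - 1 / lam * deriv besselI1 (1 / lam) = -TC.Abes (1 / lam) :=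
      TC.denom_eq (1 / lam)
    have hnum : |besselI1 (σ * (1 / lam)) - σ * besselI1 (1 / lam)| ≤ besselI1 (1 / lam) := by
      have h1' : besselI1 (σ * (1 / lam)) ≤ besselI1 (1 / lam) :=
        TC.besselI1_mono hσ0 hσ1 hx0.le
      have h2 : 0 ≤ besselI1 (σ * (1 / lam)) := TC.besselI1_nonneg (by positivity)
      have h3 : 0 ≤ besselI1 (1 / lam) := TC.besselI1_nonneg hx0.le
      have h4 : σ * besselI1 (1 / lam) ≤ besselI1 (1 / lam) := by nlinarith
      have h5 : 0 ≤ σ * besselI1 (1 / lam) := by positivity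
      rw [abs_le]
      constructor <;> nlinarith
    rw [hσx, hden, Real.norm_eq_abs, abs_div, abs_neg, abs_of_pos hA]
    have h3 : 0 ≤ besselI1 (1 / lam) := TC.besselI1_nonneg hx0.le
    exact div_le_div_of_nonneg_right hnum hA.le
  have := hT.const_add σ
  simpa using this
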